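/- Let χ' : 𝔽_qˣ → kˣ be a character and let χ be the restriction of χ'∘det to H (so χ^s = χ). Let M be a k[Γ]-module and v ∈ M a nonzero vector such that u·v = v for all u ∈ U, h·v = χ(h)·v for all h ∈ H, and Σ_{λ∈𝔽_q} u_λ·(n_s⁻¹·v) = −v. Then the k[Γ]-submodule of M generated by v is isomorphic to Im(T_{n_s} : Ind_B^Γ χ → Ind_B^Γ χ); in particular it has dimension q over k. -/

import Mathlib

/-!
Frobenius reciprocity turns `v` into the `Γ`-map `indLift ρ v : Ind_B^Γ χ → M`,
`f ↦ ∑_{Bx ∈ B\Γ} f(x) • x⁻¹ v`, whose image is the submodule generated by `v` and which sends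
the function `f₀` supported on `B` to `v`. Its kernel is exactly the line of `χ' ∘ det`. This line
lies in the kernel by the Hecke relation for `v`. Conversely, since `U` is a `p`-group acting in
characteristic `p`, a nonzero kernel element vanishing at `1` could be replaced by a `U`-fixed one,
i.e. by a multiple of `w = T_{n_s} f₀ = χ' ∘ det - f₀`; but `w` maps to `-v ≠ 0`.

Inside `Ind_B^Γ χ` the vector `w` satisfies the same hypotheses as `v`, and `T_{n_s} = indLift w` on
`Ind_B^Γ χ`. Hence the submodule generated by `v` and `Im T_{n_s}` are both isomorphic to
`Ind_B^Γ χ / k (χ' ∘ det)`, of dimension `(q + 1) - 1 = q`.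
-/

open Matrix

noncomputable section

abbrev GL2 (F : Type) [Field F] := Matrix.GeneralLinearGroup (Fin 2) F

variable (F : Type) [Field F] [Fintype F] (k : Type) [Field k]

/-- The unipotent upper-triangular matrix `[[1, c], [0, 1]]`. -/
def uElt (c : F) : GL2 F :=
  Matrix.GeneralLinearGroup.mkOfDetNeZero !![1, c; 0, 1] (by simp [Matrix.det_fin_two_of])

/-- The upper-triangular matrix `[[a, c], [0, d]]`. -/
def bElt (a d : Fˣ) (c : F) : GL2 F :=
  Matrix.GeneralLinearGroup.mkOfDetNeZero !![(a : F), c; 0, (d : F)]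
    (by simp [Matrix.det_fin_two_of])

/-- The diagonal matrix `[[a, 0], [0, d]]`. -/
def hElt (a d : Fˣ) : GL2 F := bElt F a d 0

/-- The matrix `n_s = [[0, -1], [1, 0]]`. -/
def nsElt : GL2 F :=
  Matrix.GeneralLinearGroup.mkOfDetNeZero !![0, -1; 1, 0] (by norm_num [Matrix.det_fin_two_of])

/-- The right-translation representation of `GL₂(F)` on the space of `k`-valued functions. -/
def rt : Representation k (GL2 F) (GL2 F → k) where
  toFun g :=
    { toFun := fun f x => f (x * g)
      map_add' := fun _ _ => rfl
      map_smul' := fun _ _ => rfl }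
  map_one' := by ext f x; simp
  map_mul' g g' := by ext f x; simp [mul_assoc]

/-- `χ^s`, the character obtained from `χ` by swapping the two diagonal entries. -/
def swapChar (χ : (Fˣ × Fˣ) →* kˣ) : (Fˣ × Fˣ) →* kˣ where
  toFun x := χ (x.2, x.1)
  map_one' := χ.map_one
  map_mul' x y := by rw [← _root_.map_mul]; rfl

/-- The induced representation `Ind_B^Γ χ` as a subspace of the space of functions `Γ → k`:
functions satisfying `f (b * g) = χ (b) * f g` for all upper-triangular `b`. -/
def Ind (χ : (Fˣ × Fˣ) →* kˣ) : Submodule k (GL2 F → k) where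
  carrier := {f | ∀ (a d : Fˣ) (c : F) (g : GL2 F), f (bElt F a d c * g) = (χ (a, d) : k) * f g}
  add_mem' := by
    intro f1 f2 h1 h2 a d c g
    simp only [Pi.add_apply, h1 a d c g, h2 a d c g]
    ring
  zero_mem' := by intro a d c g; simp
  smul_mem' := by
    intro t f hf a d c g
    simp only [Pi.smul_apply, smul_eq_mul, hf a d c g]
    ring

/-- The Hecke operator `T_{n_s}`, `(T f) x = ∑_{c ∈ F} f (n_s⁻¹ * u_c * x)`. -/
def heckeT : (GL2 F → k) →ₗ[k] (GL2 F → k) where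
  toFun f x := ∑ c : F, f ((nsElt F)⁻¹ * uElt F c * x)
  map_add' f g := by funext x; simp [Finset.sum_add_distrib]
  map_smul' t f := by funext x; simp [Finset.mul_sum]

/-- The submodule of invariants of a representation under a set of group elements. -/
def invSubmodule {G V : Type*} [Group G] [AddCommGroup V] [Module k V]
    (ρ : Representation k G V) (S : Set G) : Submodule k V where
  carrier := {v | ∀ g ∈ S, ρ g v = v}
  add_mem' := by intro v w hv hw g hg; rw [map_add, hv g hg, hw g hg]
  zero_mem' := by intro g hg; rw [map_zero]
  smul_mem' := by intro c v hv g hg; rw [LinearMap.map_smul, hv g hg]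

end

theorem Module.End.exists_pow_apply_ne_zero_of_isNilpotent {R V : Type*} [Ring R]
    [AddCommGroup V] [Module R V] {N : Module.End R V} (hN : IsNilpotent N) {w : V}
    (hw : w ≠ 0) : ∃ j : ℕ, (N ^ j) w ≠ 0 ∧ N ((N ^ j) w) = 0 := by
  obtain ⟨n, hn⟩ := hN
  by_contra! h
  have hpow : ∀ j : ℕ, (N ^ j) w ≠ 0 := fun j => by
    induction j with
    | zero => simpa using hw
    | succ j ih => rw [pow_succ', Module.End.mul_apply]; exact h j ih
  exact hpow n (by simp [hn])

theorem Submodule.exists_ne_zero_forall_apply_eq_zero_of_commute {R V ι : Type*} [Ring R]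
    [AddCommGroup V] [Module R V] (N : ι → Module.End R V)
    (hcomm : ∀ i j, Commute (N i) (N j)) (hnil : ∀ i, IsNilpotent (N i))
    {W : Submodule R V} (hW : ∀ i, ∀ w ∈ W, N i w ∈ W) {w₀ : V} (hw₀ : w₀ ∈ W)
    (hne : w₀ ≠ 0) (s : Finset ι) : ∃ w ∈ W, w ≠ 0 ∧ ∀ i ∈ s, N i w = 0 := by
  classical
  induction s using Finset.induction_on with
  | empty => exact ⟨w₀, hw₀, hne, by simp⟩
  | insert a s _ ih =>
    obtain ⟨w, hwW, hw0, hws⟩ := ih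
    obtain ⟨j, hj, hja⟩ := Module.End.exists_pow_apply_ne_zero_of_isNilpotent (hnil a) hw0
    have hpow : ∀ m : ℕ, (N a ^ m) w ∈ W := fun m => by
      induction m with
      | zero => simpa using hwW
      | succ m ih => rw [pow_succ', Module.End.mul_apply]; exact hW a _ ih
    refine ⟨(N a ^ j) w, hpow j, hj, fun i hi => ?_⟩
    rcases Finset.mem_insert.mp hi with rfl | hi
    · exact hja
    · rw [← Module.End.mul_apply, ((hcomm a i).pow_left j).symm.eq, Module.End.mul_apply,
        hws i hi, map_zero]

theorem LinearMap.exists_comp_eq_of_ker_le {K V M N : Type*} [Field K] [AddCommGroup V]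
    [Module K V] [AddCommGroup M] [Module K M] [AddCommGroup N] [Module K N]
    (A : V →ₗ[K] M) (B : V →ₗ[K] N) (h : LinearMap.ker A ≤ LinearMap.ker B) :
    ∃ e : M →ₗ[K] N, e ∘ₗ A = B := by
  obtain ⟨e, he⟩ := LinearMap.exists_extend
    ((LinearMap.ker A).liftQ B h ∘ₗ (LinearMap.quotKerEquivRange A).symm.toLinearMap)
  refine ⟨e, LinearMap.ext fun x => ?_⟩
  have hx := LinearMap.congr_fun he ⟨A x, x, rfl⟩
  simp only [LinearMap.comp_apply, Submodule.subtype_apply] at hx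
  rw [LinearMap.comp_apply, hx, LinearEquiv.coe_coe, (LinearEquiv.symm_apply_eq _).mpr
    (Subtype.ext (LinearMap.quotKerEquivRange_apply_mk A x).symm)]
  rfl

namespace GL2

open Matrix.GeneralLinearGroup
open scoped Classical

variable {F : Type} [Field F]

@[simp] lemma coe_uElt (c : F) : (uElt F c : Matrix (Fin 2) (Fin 2) F) = !![1, c; 0, 1] := rfl

@[simp] lemma coe_bElt (a d : Fˣ) (c : F) :
    (bElt F a d c : Matrix (Fin 2) (Fin 2) F) = !![(a : F), c; 0, (d : F)] := rfl

@[simp] lemma coe_nsElt : (nsElt F : Matrix (Fin 2) (Fin 2) F) = !![0, -1; 1, 0] := rfl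

lemma uElt_mul (c d : F) : uElt F c * uElt F d = uElt F (c + d) := by
  ext : 1
  simp [add_comm]

@[simp] lemma uElt_zero : uElt F 0 = 1 := by
  ext : 1
  simp [Matrix.one_fin_two]

lemma uElt_inv (c : F) : (uElt F c)⁻¹ = uElt F (-c) :=
  inv_eq_of_mul_eq_one_right (by rw [uElt_mul, add_neg_cancel, uElt_zero])

lemma uElt_pow (c : F) (m : ℕ) : uElt F c ^ m = uElt F (m • c) := by
  induction m with
  | zero => simp
  | succ m ih => rw [pow_succ, ih, uElt_mul, succ_nsmul]

lemma bElt_one_one (c : F) : bElt F 1 1 c = uElt F c := by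
  ext : 1
  simp

lemma bElt_eq_hElt_mul_uElt (a d : Fˣ) (c : F) :
    bElt F a d c = hElt F a d * uElt F ((a : F)⁻¹ * c) := by
  ext : 1
  simp [hElt]

lemma nsElt_inv : (nsElt F)⁻¹ = hElt F (-1) (-1) * nsElt F := by
  ext : 1
  simp [hElt, Matrix.inv_def, Matrix.adjugate_fin_two_of]

@[simp] lemma det_bElt (a d : Fˣ) (c : F) : det (bElt F a d c) = a * d := by
  ext
  simp [Matrix.det_fin_two_of]

@[simp] lemma det_uElt (c : F) : det (uElt F c) = 1 := by
  ext
  simp [Matrix.det_fin_two_of]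

@[simp] lemma det_nsElt : det (nsElt F) = 1 := by
  ext
  simp [Matrix.det_fin_two_of]

/- `Option F` stands for `B \ GL₂(F) ≅ ℙ¹(F)`: `cosetRep` picks the representatives `1` and
`n_s u_c`, and `cosetIdx g` indexes the coset `B g`. -/
def cosetRep : Option F → GL2 F
  | none => 1
  | some c => nsElt F * uElt F c

@[simp] lemma cosetRep_none : cosetRep (none : Option F) = 1 := rfl

lemma cosetRep_some (c : F) : cosetRep (some c) = nsElt F * uElt F c := rfl

@[simp] lemma coe_cosetRep_some (c : F) :
    (cosetRep (some c) : Matrix (Fin 2) (Fin 2) F) = !![0, -1; 1, c] := by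
  simp [cosetRep_some]

@[simp] lemma det_cosetRep (o : Option F) : det (cosetRep o) = 1 := by
  cases o <;> simp [cosetRep_some]

noncomputable def cosetIdx (g : GL2 F) : Option F :=
  if g.val 1 0 = 0 then none else some (g.val 1 1 / g.val 1 0)

@[simp] lemma cosetIdx_cosetRep (o : Option F) : cosetIdx (cosetRep o) = o := by
  cases o <;> simp [cosetIdx]

lemma bElt_mul_val_one_zero (a d : Fˣ) (c : F) (g : GL2 F) :
    (bElt F a d c * g).val 1 0 = d * g.val 1 0 := by
  simp [Matrix.mul_apply]

lemma mul_bElt_val_one_zero (g : GL2 F) (a d : Fˣ) (c : F) :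
    (g * bElt F a d c).val 1 0 = g.val 1 0 * a := by
  simp [Matrix.mul_apply]

lemma cosetIdx_bElt_mul (a d : Fˣ) (c : F) (g : GL2 F) :
    cosetIdx (bElt F a d c * g) = cosetIdx g := by
  simp [cosetIdx, Matrix.mul_apply, mul_div_mul_left, d.ne_zero]

theorem exists_eq_bElt_mul_cosetRep (g : GL2 F) :
    ∃ (a d : Fˣ) (c : F), g = bElt F a d c * cosetRep (cosetIdx g) := by
  have hdet : g.val 0 0 * g.val 1 1 - g.val 0 1 * g.val 1 0 ≠ 0 := by
    simpa [Matrix.det_fin_two] using Matrix.GeneralLinearGroup.det_ne_zero g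
  by_cases h : g.val 1 0 = 0
  · rw [h, mul_zero, sub_zero] at hdet
    refine ⟨Units.mk0 _ (left_ne_zero_of_mul hdet), Units.mk0 _ (right_ne_zero_of_mul hdet),
      g.val 0 1, ?_⟩
    ext i j
    fin_cases i <;> fin_cases j <;> simp [cosetIdx, h]
  · refine ⟨Units.mk0 _ (div_ne_zero hdet h), Units.mk0 _ h, g.val 0 0, ?_⟩
    ext i j
    fin_cases i <;> fin_cases j <;> simp [cosetIdx, h, Matrix.mul_apply]
    · field_simp
      ring
    · field_simp

lemma cosetIdx_cosetRep_cosetIdx_mul (h g : GL2 F) :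
    cosetIdx (cosetRep (cosetIdx h) * g) = cosetIdx (h * g) := by
  obtain ⟨a, d, c, hh⟩ := exists_eq_bElt_mul_cosetRep h
  calc cosetIdx (cosetRep (cosetIdx h) * g)
      = cosetIdx (bElt F a d c * (cosetRep (cosetIdx h) * g)) := (cosetIdx_bElt_mul ..).symm
    _ = cosetIdx (h * g) := by rw [← mul_assoc, ← hh]

noncomputable def cosetShift (g : GL2 F) : Equiv.Perm (Option F) where
  toFun o := cosetIdx (cosetRep o * g)
  invFun o := cosetIdx (cosetRep o * g⁻¹)
  left_inv o := by simp [cosetIdx_cosetRep_cosetIdx_mul, mul_assoc]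
  right_inv o := by simp [cosetIdx_cosetRep_cosetIdx_mul, mul_assoc]

end GL2

section Induced

open Matrix.GeneralLinearGroup GL2
open scoped Classical

variable {F : Type} [Field F] {k : Type} [Field k] {M : Type} [AddCommGroup M] [Module k M]

lemma rt_apply (g : GL2 F) (f : GL2 F → k) (x : GL2 F) : rt F k g f x = f (x * g) := rfl

lemma rt_mem_Ind {χ : (Fˣ × Fˣ) →* kˣ} {f : GL2 F → k} (hf : f ∈ Ind F k χ) (g : GL2 F) :
    rt F k g f ∈ Ind F k χ := fun a d c x => by
  simpa only [rt_apply, mul_assoc] using hf a d c (x * g)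

def IsBorelEigenvector (ρ : Representation k (GL2 F) M) (χ : (Fˣ × Fˣ) →* kˣ) (v : M) : Prop :=
  ∀ (a d : Fˣ) (c : F), ρ (bElt F a d c) v = (χ (a, d) : k) • v

lemma isBorelEigenvector_of_uElt_hElt {ρ : Representation k (GL2 F) M}
    {χ : (Fˣ × Fˣ) →* kˣ} {v : M} (hU : ∀ c : F, ρ (uElt F c) v = v)
    (hH : ∀ a d : Fˣ, ρ (hElt F a d) v = (χ (a, d) : k) • v) : IsBorelEigenvector ρ χ v := by
  intro a d c
  rw [bElt_eq_hElt_mul_uElt, map_mul, Module.End.mul_apply, hU, hH]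

lemma IsBorelEigenvector.uElt_apply {ρ : Representation k (GL2 F) M}
    {χ : (Fˣ × Fˣ) →* kˣ} {v : M} (hv : IsBorelEigenvector ρ χ v) (c : F) :
    ρ (uElt F c) v = v := by
  rw [← bElt_one_one, hv, ← Prod.one_eq_mk, map_one, Units.val_one, one_smul]

variable (χ' : Fˣ →* kˣ)

def detFn : GL2 F → k := fun g => χ' (det g)

noncomputable def borelFn : GL2 F → k := fun g => if g.val 1 0 = 0 then (χ' (det g) : k) else 0

-- `T_{n_s} (borelFn χ')`, which generates `Im T_{n_s}`.
noncomputable def steinbergFn : GL2 F → k := detFn χ' - borelFn χ'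

lemma detFn_mem : detFn χ' ∈ Ind F k (χ'.comp mulMonoidHom) := fun a d c g => by
  simp [detFn]

lemma borelFn_mem : borelFn χ' ∈ Ind F k (χ'.comp mulMonoidHom) := fun a d c g => by
  simp [borelFn, bElt_mul_val_one_zero, d.ne_zero]

lemma steinbergFn_mem : steinbergFn χ' ∈ Ind F k (χ'.comp mulMonoidHom) :=
  sub_mem (detFn_mem χ') (borelFn_mem χ')

lemma rt_detFn (g : GL2 F) : rt F k g (detFn χ') = (χ' (det g) : k) • detFn χ' := by
  ext x
  simp [rt_apply, detFn, mul_comm]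

lemma rt_bElt_borelFn (a d : Fˣ) (c : F) :
    rt F k (bElt F a d c) (borelFn χ') = (χ' (a * d) : k) • borelFn χ' := by
  ext x
  simp [rt_apply, borelFn, mul_bElt_val_one_zero, a.ne_zero, mul_comm]

lemma isBorelEigenvector_steinbergFn :
    IsBorelEigenvector (rt F k) (χ'.comp mulMonoidHom) (steinbergFn χ') := fun a d c => by
  simp [steinbergFn, rt_detFn, rt_bElt_borelFn, smul_sub]

lemma steinbergFn_apply_of_det_eq_one {g : GL2 F} (hg : det g = 1) :
    steinbergFn χ' g = if g.val 1 0 = 0 then 0 else 1 := by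
  split_ifs with h <;> simp [steinbergFn, detFn, borelFn, hg, h]

lemma detFn_ne_zero : detFn χ' ≠ (0 : GL2 F → k) := fun h => by
  simpa [detFn] using congr_fun h 1

lemma steinbergFn_ne_zero : steinbergFn χ' ≠ (0 : GL2 F → k) := fun h => by
  simpa [steinbergFn_apply_of_det_eq_one] using congr_fun h (nsElt F)

lemma apply_eq_of_mem_Ind {f : GL2 F → k} (hf : f ∈ Ind F k (χ'.comp mulMonoidHom)) (g : GL2 F) :
    f g = χ' (det g) * f (cosetRep (cosetIdx g)) := by
  obtain ⟨a, d, c, hg⟩ := exists_eq_bElt_mul_cosetRep g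
  have hdet : det g = a * d := by rw [hg]; simp
  rw [hdet]
  conv_lhs => rw [hg]
  exact hf a d c _

lemma eq_of_mem_Ind_of_cosetRep {f f' : GL2 F → k} (hf : f ∈ Ind F k (χ'.comp mulMonoidHom))
    (hf' : f' ∈ Ind F k (χ'.comp mulMonoidHom)) (h : ∀ o, f (cosetRep o) = f' (cosetRep o)) :
    f = f' :=
  funext fun g => by rw [apply_eq_of_mem_Ind χ' hf, apply_eq_of_mem_Ind χ' hf', h]

lemma eq_of_mem_Ind_of_uElt_fixed {f f' : GL2 F → k} (hf : f ∈ Ind F k (χ'.comp mulMonoidHom))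
    (hf' : f' ∈ Ind F k (χ'.comp mulMonoidHom)) (hfU : ∀ c, rt F k (uElt F c) f = f)
    (hf'U : ∀ c, rt F k (uElt F c) f' = f') (h1 : f 1 = f' 1) (hns : f (nsElt F) = f' (nsElt F)) :
    f = f' := by
  refine eq_of_mem_Ind_of_cosetRep χ' hf hf' fun o => ?_
  cases o with
  | none => exact h1
  | some c =>
    rw [cosetRep_some, ← rt_apply _ f, hfU, ← rt_apply _ f', hf'U, hns]

noncomputable def indEquivFun :
    Ind F k (χ'.comp mulMonoidHom) ≃ₗ[k] (Option F → k) where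
  toFun f o := (f : GL2 F → k) (cosetRep o)
  map_add' _ _ := rfl
  map_smul' _ _ := rfl
  invFun t := ⟨fun g => χ' (det g) * t (cosetIdx g), fun a d c g => by
    simp [cosetIdx_bElt_mul, mul_assoc]⟩
  left_inv f := Subtype.ext <| funext fun g => (apply_eq_of_mem_Ind χ' f.2 g).symm
  right_inv t := funext fun o => by simp

lemma finrank_Ind [Fintype F] :
    Module.finrank k (Ind F k (χ'.comp mulMonoidHom)) = Fintype.card F + 1 := by
  rw [(indEquivFun χ').finrank_eq, Module.finrank_fintype_fun_eq_card, Fintype.card_option]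

end Induced

section FrobeniusLift

open Matrix.GeneralLinearGroup GL2

variable {F : Type} [Field F] [Fintype F] {k : Type} [Field k]
  {M : Type} [AddCommGroup M] [Module k M]

-- The map `Ind_B^Γ χ → M` that Frobenius reciprocity attaches to `v`.
noncomputable def indLift (ρ : Representation k (GL2 F) M) (v : M) : (GL2 F → k) →ₗ[k] M :=
  ∑ o : Option F, (LinearMap.proj (cosetRep o)).smulRight (ρ (cosetRep o)⁻¹ v)

lemma indLift_apply (ρ : Representation k (GL2 F) M) (v : M) (f : GL2 F → k) :
    indLift ρ v f = ∑ o : Option F, f (cosetRep o) • ρ (cosetRep o)⁻¹ v := by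
  simp [indLift]

theorem indLift_rt {ρ : Representation k (GL2 F) M} {χ : (Fˣ × Fˣ) →* kˣ} {v : M}
    (hv : IsBorelEigenvector ρ χ v) {f : GL2 F → k} (hf : f ∈ Ind F k χ) (g : GL2 F) :
    indLift ρ v (rt F k g f) = ρ g (indLift ρ v f) := by
  simp only [indLift_apply, map_sum, map_smul]
  refine Fintype.sum_equiv (cosetShift g) _ _ fun o => ?_
  obtain ⟨a, d, c, h⟩ : ∃ (a d : Fˣ) (c : F),
      cosetRep o * g = bElt F a d c * cosetRep (cosetShift g o) :=
    exists_eq_bElt_mul_cosetRep _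
  have h' : g * (cosetRep (cosetShift g o))⁻¹ = (cosetRep o)⁻¹ * bElt F a d c := by
    rw [eq_inv_mul_iff_mul_eq, ← mul_assoc, h, mul_inv_cancel_right]
  rw [rt_apply, h, hf, ← Module.End.mul_apply, ← map_mul, h', map_mul, Module.End.mul_apply,
    hv, map_smul, smul_smul, mul_comm]

variable (χ' : Fˣ →* kˣ)

lemma indLift_borelFn (ρ : Representation k (GL2 F) M) (v : M) :
    indLift ρ v (borelFn χ') = v := by
  simp [indLift_apply, Fintype.sum_option, borelFn, cosetRep_some]

lemma indLift_detFn {ρ : Representation k (GL2 F) M} {v : M}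
    (hsum : ∑ c : F, ρ (uElt F c) (ρ (nsElt F)⁻¹ v) = -v) : indLift ρ v (detFn χ') = 0 := by
  have hinv : ∑ c : F, ρ (cosetRep (some c))⁻¹ v = -v := by
    rw [← hsum]
    refine Fintype.sum_equiv (Equiv.neg F) _ _ fun c => ?_
    rw [cosetRep_some, _root_.mul_inv_rev, map_mul, uElt_inv, Module.End.mul_apply, Equiv.neg_apply]
  simp [indLift_apply, Fintype.sum_option, detFn, hinv]

lemma indLift_steinbergFn {ρ : Representation k (GL2 F) M} {v : M}
    (hsum : ∑ c : F, ρ (uElt F c) (ρ (nsElt F)⁻¹ v) = -v) :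
    indLift ρ v (steinbergFn χ') = -v := by
  rw [steinbergFn, map_sub, indLift_detFn χ' hsum, indLift_borelFn, zero_sub]

theorem map_indLift_Ind {ρ : Representation k (GL2 F) M} {v : M}
    (hv : IsBorelEigenvector ρ (χ'.comp mulMonoidHom) v) :
    (Ind F k (χ'.comp mulMonoidHom)).map (indLift ρ v) =
      Submodule.span k (Set.range fun g : GL2 F => ρ g v) := by
  apply le_antisymm
  · rintro _ ⟨f, -, rfl⟩
    rw [indLift_apply]
    exact Submodule.sum_mem _ fun o _ => Submodule.smul_mem _ _ (Submodule.subset_span ⟨_, rfl⟩)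
  · rw [Submodule.span_le]
    rintro _ ⟨g, rfl⟩
    exact ⟨_, rt_mem_Ind (borelFn_mem χ') g,
      by rw [indLift_rt hv (borelFn_mem χ'), indLift_borelFn]⟩

end FrobeniusLift

section Kernel

open Matrix.GeneralLinearGroup GL2

variable {F : Type} [Field F] [Fintype F] {k : Type} [Field k]
  {M : Type} [AddCommGroup M] [Module k M]

theorem exists_ne_zero_forall_uElt_fixed (p : ℕ) [Fact p.Prime] [CharP F p] [CharP k p]
    {V : Type} [AddCommGroup V] [Module k V] (σ : Representation k (GL2 F) V)
    {W : Submodule k V} (hW : ∀ c : F, ∀ x ∈ W, σ (uElt F c) x ∈ W) {x : V} (hx : x ∈ W)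
    (hx0 : x ≠ 0) : ∃ y ∈ W, y ≠ 0 ∧ ∀ c : F, σ (uElt F c) y = y := by
  have : Nontrivial V := ⟨⟨x, 0, hx0⟩⟩
  have : CharP (Module.End k V) p := charP_of_injective_algebraMap' k p
  have hcomm : ∀ c d : F, Commute (σ (uElt F c)) (σ (uElt F d)) := fun c d => by
    rw [Commute, SemiconjBy, ← map_mul, ← map_mul, uElt_mul, uElt_mul, add_comm]
  have hnil : ∀ c : F, IsNilpotent (σ (uElt F c) - 1) := fun c => ⟨p, by
    rw [sub_pow_char_of_commute (p := p) (h := Commute.one_right _), ← map_pow, uElt_pow,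
      nsmul_eq_mul, CharP.cast_eq_zero, zero_mul, uElt_zero, map_one, one_pow, sub_self]⟩
  obtain ⟨y, hyW, hy0, hy⟩ := Submodule.exists_ne_zero_forall_apply_eq_zero_of_commute
    (fun c => σ (uElt F c) - 1) (fun c d => ((hcomm c d).sub_left (.one_left _)).sub_right
      (.one_right _)) hnil (fun c w hw => W.sub_mem (hW c w hw) hw) hx hx0 Finset.univ
  exact ⟨y, hyW, hy0, fun c => sub_eq_zero.mp (hy c (Finset.mem_univ c))⟩

variable (χ' : Fˣ →* kˣ)

theorem indLift_eq_zero_iff (p : ℕ) [Fact p.Prime] [CharP F p] [CharP k p]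
    {ρ : Representation k (GL2 F) M} {v : M}
    (hv : IsBorelEigenvector ρ (χ'.comp mulMonoidHom) v)
    (hsum : ∑ c : F, ρ (uElt F c) (ρ (nsElt F)⁻¹ v) = -v) (hv0 : v ≠ 0)
    {f : GL2 F → k} (hf : f ∈ Ind F k (χ'.comp mulMonoidHom)) :
    indLift ρ v f = 0 ↔ f ∈ k ∙ detFn χ' := by
  refine ⟨fun hf0 => Submodule.mem_span_singleton.mpr ⟨f 1, ?_⟩, fun h => ?_⟩
  swap
  · obtain ⟨a, rfl⟩ := Submodule.mem_span_singleton.mp h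
    rw [map_smul, indLift_detFn χ' hsum, smul_zero]
  refine (eq_of_sub_eq_zero ?_).symm
  let W : Submodule k (GL2 F → k) :=
    Ind F k (χ'.comp mulMonoidHom) ⊓ LinearMap.ker (indLift ρ v) ⊓
      LinearMap.ker (LinearMap.proj 1)
  have mem_W : ∀ h, h ∈ W ↔ (h ∈ Ind F k (χ'.comp mulMonoidHom) ∧ indLift ρ v h = 0) ∧ h 1 = 0 :=
    fun h => Iff.rfl
  have hW : ∀ c : F, ∀ h ∈ W, rt F k (uElt F c) h ∈ W := by
    intro c h hh
    obtain ⟨⟨hInd, hker⟩, h1⟩ := (mem_W h).mp hh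
    refine (mem_W _).mpr ⟨⟨rt_mem_Ind hInd _, by rw [indLift_rt hv hInd, hker, map_zero]⟩, ?_⟩
    rw [rt_apply, one_mul, ← bElt_one_one, ← mul_one (bElt F 1 1 c), hInd, h1, mul_zero]
  -- A nonzero `U`-fixed element of `W` would be a multiple of `steinbergFn χ'`, which maps to `-v`.
  by_contra hne
  have hg : f - f 1 • detFn χ' ∈ W := (mem_W _).mpr ⟨⟨sub_mem hf (Submodule.smul_mem _ _
    (detFn_mem χ')), by simp [hf0, indLift_detFn χ' hsum]⟩, by simp [detFn]⟩
  obtain ⟨h, hhW, hh0, hfix⟩ :=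
    exists_ne_zero_forall_uElt_fixed p (rt F k) hW hg hne
  obtain ⟨⟨hInd, hker⟩, h1⟩ := (mem_W h).mp hhW
  have hst : h = h (nsElt F) • steinbergFn χ' := by
    refine eq_of_mem_Ind_of_uElt_fixed χ' hInd (Submodule.smul_mem _ _ (steinbergFn_mem χ')) hfix
      (fun c => by rw [map_smul, (isBorelEigenvector_steinbergFn χ').uElt_apply]) ?_ ?_
    · simpa [steinbergFn_apply_of_det_eq_one] using h1
    · simp [steinbergFn_apply_of_det_eq_one]
  have hns : h (nsElt F) ≠ 0 := fun h0 => hh0 (by rw [hst, h0, zero_smul])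
  have := congrArg (indLift ρ v) hst
  rw [hker, map_smul, indLift_steinbergFn χ' hsum, eq_comm, smul_eq_zero, neg_eq_zero] at this
  exact hv0 (this.resolve_left hns)

theorem ker_indLift_comp_subtype (p : ℕ) [Fact p.Prime] [CharP F p] [CharP k p]
    {ρ : Representation k (GL2 F) M} {v : M}
    (hv : IsBorelEigenvector ρ (χ'.comp mulMonoidHom) v)
    (hsum : ∑ c : F, ρ (uElt F c) (ρ (nsElt F)⁻¹ v) = -v) (hv0 : v ≠ 0) :
    LinearMap.ker (indLift ρ v ∘ₗ (Ind F k (χ'.comp mulMonoidHom)).subtype) =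
      k ∙ (⟨detFn χ', detFn_mem χ'⟩ : Ind F k (χ'.comp mulMonoidHom)) := by
  ext f
  simp only [LinearMap.mem_ker, LinearMap.comp_apply, Submodule.subtype_apply,
    indLift_eq_zero_iff χ' p hv hsum hv0 f.2, Submodule.mem_span_singleton, Subtype.ext_iff,
    Submodule.coe_smul]

end Kernel

section Hecke

open Matrix.GeneralLinearGroup GL2
open scoped Classical

variable {F : Type} [Field F] [Fintype F] {k : Type} [Field k] (χ' : Fˣ →* kˣ)

lemma heckeT_apply (f : GL2 F → k) (x : GL2 F) :
    heckeT F k f x = ∑ c : F, f ((nsElt F)⁻¹ * uElt F c * x) := rfl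

lemma heckeT_rt (g : GL2 F) (f : GL2 F → k) :
    heckeT F k (rt F k g f) = rt F k g (heckeT F k f) := by
  ext x
  simp [heckeT_apply, rt_apply, mul_assoc]

lemma heckeT_apply_one {f : GL2 F → k} (hf : f ∈ Ind F k (χ'.comp mulMonoidHom)) :
    heckeT F k f 1 = ∑ c : F, f (cosetRep (some c)) := by
  refine Finset.sum_congr rfl fun c _ => ?_
  rw [mul_one, nsElt_inv, mul_assoc, hElt, hf]
  simp [cosetRep_some]

theorem heckeT_eq_indLift {f : GL2 F → k} (hf : f ∈ Ind F k (χ'.comp mulMonoidHom)) :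
    heckeT F k f = indLift (rt F k) (steinbergFn χ') f := by
  have indLift_apply_one : ∀ f' : GL2 F → k,
      indLift (rt F k) (steinbergFn χ') f' 1 = ∑ c : F, f' (cosetRep (some c)) := fun f' => by
    simp [indLift_apply, Fintype.sum_option, rt_apply, steinbergFn_apply_of_det_eq_one,
      Matrix.inv_def, Matrix.adjugate_fin_two_of, cosetRep_some]
  -- Both sides are `Γ`-equivariant in `f`, so it suffices to compare them at `1`.
  ext g
  calc heckeT F k f g = heckeT F k (rt F k g f) 1 := by rw [heckeT_rt, rt_apply, one_mul]
    _ = indLift (rt F k) (steinbergFn χ') (rt F k g f) 1 := by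
      rw [heckeT_apply_one χ' (rt_mem_Ind hf g), indLift_apply_one]
    _ = indLift (rt F k) (steinbergFn χ') f g := by
      rw [indLift_rt (isBorelEigenvector_steinbergFn χ') hf, rt_apply, one_mul]

theorem sum_rt_uElt_rt_nsElt_inv_steinbergFn (hq : (Fintype.card F : k) = 0) :
    ∑ c : F, rt F k (uElt F c) (rt F k (nsElt F)⁻¹ (steinbergFn χ')) = -steinbergFn χ' := by
  -- Both sides are `U`-fixed elements of `Ind_B^Γ χ`, determined by their values at `1` and `n_s`.
  have hU := (isBorelEigenvector_steinbergFn χ').uElt_apply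
  refine eq_of_mem_Ind_of_uElt_fixed χ'
    (sum_mem fun c _ => rt_mem_Ind (rt_mem_Ind (steinbergFn_mem χ') _) _)
    (neg_mem (steinbergFn_mem χ')) (fun d => ?_) (fun d => by rw [map_neg, hU]) ?_ ?_
  · rw [map_sum]
    exact Fintype.sum_equiv (Equiv.addLeft d) _ _ fun c => by
      rw [← Module.End.mul_apply, ← map_mul, uElt_mul]; rfl
  · simp [Finset.sum_apply, rt_apply, steinbergFn_apply_of_det_eq_one, Matrix.inv_def,
      Matrix.adjugate_fin_two_of, hq]
  · have hind : ∀ c : F, (if c = 0 then (0 : k) else 1) = 1 - if c = 0 then 1 else 0 := fun c => by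
      split_ifs <;> simp
    simp [Finset.sum_apply, rt_apply, steinbergFn_apply_of_det_eq_one, Matrix.mul_apply,
      Matrix.inv_def, Matrix.adjugate_fin_two_of, hind, Finset.sum_sub_distrib, hq]

theorem ker_heckeT_comp_subtype (p : ℕ) [Fact p.Prime] [CharP F p] [CharP k p] :
    LinearMap.ker (heckeT F k ∘ₗ (Ind F k (χ'.comp mulMonoidHom)).subtype) =
      k ∙ (⟨detFn χ', detFn_mem χ'⟩ : Ind F k (χ'.comp mulMonoidHom)) := by
  have hq : (Fintype.card F : k) = 0 := (CharP.cast_eq_zero_iff k p _).mpr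
    ((CharP.cast_eq_zero_iff F p _).mp (Nat.cast_card_eq_zero F))
  rw [← ker_indLift_comp_subtype χ' p (isBorelEigenvector_steinbergFn χ')
    (sum_rt_uElt_rt_nsElt_inv_steinbergFn χ' hq) (steinbergFn_ne_zero χ')]
  exact congrArg LinearMap.ker (LinearMap.ext fun f => heckeT_eq_indLift χ' f.2)

end Hecke

section

variable (F : Type) [Field F] [Fintype F] (k : Type) [Field k]

theorem stmt_3 (p n : ℕ) [Fact p.Prime] (hF : Fintype.card F = p ^ n)
    [CharP k p]
    (χ' : Fˣ →* kˣ)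
    (M : Type) [AddCommGroup M] [Module k M]
    (ρ : Representation k (GL2 F) M) (v : M) (hv : v ≠ 0)
    (hU : ∀ c : F, ρ (uElt F c) v = v)
    (hH : ∀ a d : Fˣ, ρ (hElt F a d) v = (χ' (a * d) : k) • v)
    (hsum : ∑ c : F, ρ (uElt F c) (ρ ((nsElt F)⁻¹) v) = -v) :
    (∃ e : M →ₗ[k] (GL2 F → k),
      (∀ (g : GL2 F), ∀ x ∈ Submodule.span k (Set.range fun g : GL2 F => ρ g v),
        e (ρ g x) = rt F k g (e x)) ∧
      (∀ x ∈ Submodule.span k (Set.range fun g : GL2 F => ρ g v), e x = 0 → x = 0) ∧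
      Submodule.map e (Submodule.span k (Set.range fun g : GL2 F => ρ g v)) =
        Submodule.map (heckeT F k) (Ind F k (χ'.comp mulMonoidHom))) ∧
    Module.finrank k ↥(Submodule.span k (Set.range fun g : GL2 F => ρ g v)) =
      Fintype.card F := by
  have : CharP F p := charP_of_card_eq_prime_pow hF
  have hv' := isBorelEigenvector_of_uElt_hElt (χ := χ'.comp mulMonoidHom) hU hH
  set A := indLift ρ v ∘ₗ (Ind F k (χ'.comp mulMonoidHom)).subtype
  set B := heckeT F k ∘ₗ (Ind F k (χ'.comp mulMonoidHom)).subtype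
  have hkerA := ker_indLift_comp_subtype χ' p hv' hsum hv
  have hkerB : LinearMap.ker B = LinearMap.ker A := by
    rw [hkerA, ker_heckeT_comp_subtype χ' p]
  have hrangeA : LinearMap.range A = Submodule.span k (Set.range fun g : GL2 F => ρ g v) := by
    rw [LinearMap.range_comp, Submodule.range_subtype, map_indLift_Ind χ' hv']
  obtain ⟨e, he⟩ := LinearMap.exists_comp_eq_of_ker_le A B hkerB.ge
  rw [← hrangeA]
  refine ⟨⟨e, ?_, ?_, ?_⟩, ?_⟩
  · rintro g _ ⟨f, rfl⟩
    have hgf : ρ g (A f) = A ⟨rt F k g f, rt_mem_Ind f.2 g⟩ := (indLift_rt hv' f.2 g).symm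
    rw [hgf, ← LinearMap.comp_apply e A, ← LinearMap.comp_apply e A, he]
    exact heckeT_rt g (f : GL2 F → k)
  · rintro _ ⟨f, rfl⟩ h0
    rw [← LinearMap.comp_apply e A, he, ← LinearMap.mem_ker, hkerB] at h0
    exact h0
  · rw [← LinearMap.range_comp, he, LinearMap.range_comp, Submodule.range_subtype]
  · have hrank := LinearMap.finrank_range_add_finrank_ker A
    rw [finrank_Ind, hkerA, finrank_span_singleton (Subtype.coe_ne_coe.mp (detFn_ne_zero χ'))]
      at hrank
    omega

end
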